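/- Let K > 0, r ∈ ℝ, σ > 0, T > 0, and let u(x,t) = x·N(d₁) − K·e^{−r(T−t)}·N(d₂) be the Black-Scholes call price with d₁, d₂ as usual. Then for every x > 0, lim_{t → T⁻} u(x,t) = max(x − K, 0). -/

import Mathlib

/-! With `τ = T - t` and `L = log (x / K)`, both `d₁` and `d₂` have the form
`L / (σ √τ) + k √τ`, so as `τ → 0⁺` they tend together to `+∞`, `0` or `-∞` according to the sign
of `L`, while the discount factor tends to `1`. The price therefore tends to `(x - K) ℓ` with
`ℓ = N(∞) = 1`, `ℓ = N(0)` (where `x - K = 0`) or `ℓ = N(-∞) = 0`, which is `max (x - K) 0`. -/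

open Real MeasureTheory

noncomputable def stdNormalCDF (z : ℝ) : ℝ :=
  (Real.sqrt (2 * Real.pi))⁻¹ * ∫ s in Set.Iic z, Real.exp (-(s ^ 2) / 2)

open Filter Topology Set

theorem MeasureTheory.Integrable.continuous_integral_Iic {E : Type*} [NormedAddCommGroup E]
    [NormedSpace ℝ E] {μ : Measure ℝ} [NullSingletonClass μ] {f : ℝ → E}
    (hf : Integrable f μ) : Continuous fun z => ∫ x in Iic z, f x ∂μ := by
  refine ((continuous_const (y := ∫ x in Iic 0, f x ∂μ)).add
    (hf.continuous_primitive 0)).congr fun z => ?_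
  rw [Pi.add_apply, ← intervalIntegral.integral_Iic_sub_Iic hf.integrableOn hf.integrableOn,
    add_sub_cancel]

theorem exp_neg_sq_div_two (s : ℝ) : exp (-(s ^ 2) / 2) = exp (-(1 / 2) * s ^ 2) := by
  ring_nf

theorem integrable_exp_neg_sq_div_two : Integrable fun s : ℝ => exp (-(s ^ 2) / 2) := by
  simpa only [exp_neg_sq_div_two] using integrable_exp_neg_mul_sq one_half_pos

theorem integral_exp_neg_sq_div_two : ∫ s : ℝ, exp (-(s ^ 2) / 2) = √(2 * π) := by
  rw [funext exp_neg_sq_div_two, integral_gaussian, div_div_eq_mul_div, div_one, mul_comm]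

theorem continuous_stdNormalCDF : Continuous stdNormalCDF :=
  continuous_const.mul integrable_exp_neg_sq_div_two.continuous_integral_Iic

theorem tendsto_stdNormalCDF_atBot : Tendsto stdNormalCDF atBot (𝓝 0) := by
  have h := (tendsto_integral_Iic_zero (f := fun s : ℝ => exp (-(s ^ 2) / 2)) (μ := volume)
    tendsto_id).const_mul (√(2 * π))⁻¹
  rwa [mul_zero] at h

theorem tendsto_stdNormalCDF_atTop : Tendsto stdNormalCDF atTop (𝓝 1) := by
  have h := ((aecover_Iic tendsto_id).integral_tendsto_of_countably_generated
    integrable_exp_neg_sq_div_two).const_mul (√(2 * π))⁻¹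
  rwa [integral_exp_neg_sq_div_two, inv_mul_cancel₀ (by positivity)] at h

theorem tendsto_const_sub_nhdsLT (T : ℝ) : Tendsto (fun t => T - t) (𝓝[<] T) (𝓝[>] 0) := by
  refine tendsto_nhdsWithin_of_tendsto_nhds_of_eventually_within _ ?_
    (eventually_nhdsWithin_of_forall fun t ht => mem_Ioi.2 (sub_pos.2 ht))
  simpa only [sub_self] using ((continuous_sub_left T).tendsto T).mono_left nhdsWithin_le_nhds

theorem tendsto_sqrt_nhdsGT_zero : Tendsto (√·) (𝓝[>] 0) (𝓝 0) := by
  simpa only [sqrt_zero] using (continuous_sqrt.tendsto 0).mono_left nhdsWithin_le_nhds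

theorem tendsto_inv_mul_sqrt_nhdsGT_zero {σ : ℝ} (hσ : 0 < σ) :
    Tendsto (fun τ => (σ * √τ)⁻¹) (𝓝[>] 0) atTop := by
  refine Tendsto.inv_tendsto_nhdsGT_zero (tendsto_nhdsWithin_of_tendsto_nhds_of_eventually_within
    _ ?_ (eventually_nhdsWithin_of_forall fun τ hτ => mul_pos hσ (sqrt_pos.2 hτ)))
  simpa only [mul_zero] using tendsto_sqrt_nhdsGT_zero.const_mul σ

theorem div_mul_sqrt_eq (L c σ τ : ℝ) :
    (L + c * τ) / (σ * √τ) = L * (σ * √τ)⁻¹ + c / σ * √τ := by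
  rw [add_div, div_eq_mul_inv, mul_div_mul_comm, div_sqrt]

section
variable {L σ : ℝ} (k : ℝ)

theorem tendsto_mul_inv_add_mul_sqrt_atTop (hL : 0 < L) (hσ : 0 < σ) :
    Tendsto (fun τ => L * (σ * √τ)⁻¹ + k * √τ) (𝓝[>] 0) atTop :=
  (tendsto_inv_mul_sqrt_nhdsGT_zero hσ).const_mul_atTop hL |>.atTop_add
    (tendsto_sqrt_nhdsGT_zero.const_mul k)

theorem tendsto_mul_inv_add_mul_sqrt_atBot (hL : L < 0) (hσ : 0 < σ) :
    Tendsto (fun τ => L * (σ * √τ)⁻¹ + k * √τ) (𝓝[>] 0) atBot :=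
  (tendsto_inv_mul_sqrt_nhdsGT_zero hσ).const_mul_atTop_of_neg hL |>.atBot_add
    (tendsto_sqrt_nhdsGT_zero.const_mul k)

end

theorem tendsto_blackScholesCall_nhdsGT_zero {N : ℝ → ℝ} (hN_bot : Tendsto N atBot (𝓝 0))
    (hN_top : Tendsto N atTop (𝓝 1)) (hN_zero : ContinuousAt N 0) {x K r σ : ℝ} (hx : 0 < x)
    (hK : 0 < K) (hσ : 0 < σ) :
    Tendsto (fun τ => x * N ((log (x / K) + (r + σ ^ 2 / 2) * τ) / (σ * √τ))
        - K * exp (-r * τ) * N ((log (x / K) + (r + σ ^ 2 / 2) * τ) / (σ * √τ) - σ * √τ))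
      (𝓝[>] 0) (𝓝 (max (x - K) 0)) := by
  set L := log (x / K)
  set c := r + σ ^ 2 / 2
  obtain ⟨ℓ, hℓ, hN⟩ : ∃ ℓ, (x - K) * ℓ = max (x - K) 0 ∧
      ∀ k, Tendsto (fun τ => N (L * (σ * √τ)⁻¹ + k * √τ)) (𝓝[>] 0) (𝓝 ℓ) := by
    rcases lt_trichotomy x K with h | rfl | h
    · refine ⟨0, by simp [h.le], fun k => hN_bot.comp (tendsto_mul_inv_add_mul_sqrt_atBot k ?_ hσ)⟩
      exact log_neg (div_pos hx hK) ((div_lt_one hK).2 h)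
    · refine ⟨N 0, by simp, fun k => ?_⟩
      simp only [L, div_self hK.ne', log_one, zero_mul, zero_add]
      have hk : Tendsto (fun τ => k * √τ) (𝓝[>] 0) (𝓝 0) := by
        simpa only [mul_zero] using tendsto_sqrt_nhdsGT_zero.const_mul k
      exact hN_zero.tendsto.comp hk
    · refine ⟨1, by simp [h.le], fun k => hN_top.comp (tendsto_mul_inv_add_mul_sqrt_atTop k ?_ hσ)⟩
      exact log_pos ((one_lt_div hK).2 h)
  have hdiscount : Tendsto (fun τ => exp (-r * τ)) (𝓝[>] 0) (𝓝 1) :=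
    ((continuous_exp.comp (continuous_const_mul (-r))).tendsto' 0 1 (by simp)).mono_left
      nhdsWithin_le_nhds
  have hd₂ (τ : ℝ) :
      L * (σ * √τ)⁻¹ + c / σ * √τ - σ * √τ = L * (σ * √τ)⁻¹ + (c / σ - σ) * √τ := by
    ring
  simp only [div_mul_sqrt_eq, hd₂]
  rw [← hℓ, sub_mul]
  simpa using ((hN (c / σ)).const_mul x).sub ((hdiscount.const_mul K).mul (hN (c / σ - σ)))

theorem stmt6_general (K r σ T : ℝ) (hK : 0 < K) (hσ : 0 < σ) :
    ∀ x : ℝ, 0 < x →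
      Filter.Tendsto (fun t : ℝ =>
          x * stdNormalCDF ((Real.log (x / K) + (r + σ ^ 2 / 2) * (T - t)) / (σ * Real.sqrt (T - t)))
          - K * Real.exp (-r * (T - t))
            * stdNormalCDF ((Real.log (x / K) + (r + σ ^ 2 / 2) * (T - t)) / (σ * Real.sqrt (T - t))
                - σ * Real.sqrt (T - t)))
        (nhdsWithin T (Set.Iio T)) (nhds (max (x - K) 0)) := by
  intro x hx
  exact (tendsto_blackScholesCall_nhdsGT_zero tendsto_stdNormalCDF_atBot tendsto_stdNormalCDF_atTop
    continuous_stdNormalCDF.continuousAt hx hK hσ).comp (tendsto_const_sub_nhdsLT T)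

theorem stmt6 (K r σ T : ℝ) (hK : 0 < K) (hσ : 0 < σ) (hT : 0 < T) :
    ∀ x : ℝ, 0 < x →
      Filter.Tendsto (fun t : ℝ =>
          x * stdNormalCDF ((Real.log (x / K) + (r + σ ^ 2 / 2) * (T - t)) / (σ * Real.sqrt (T - t)))
          - K * Real.exp (-r * (T - t))
            * stdNormalCDF ((Real.log (x / K) + (r + σ ^ 2 / 2) * (T - t)) / (σ * Real.sqrt (T - t))
                - σ * Real.sqrt (T - t)))
        (nhdsWithin T (Set.Iio T)) (nhds (max (x - K) 0)) :=
  stmt6_general K r σ T hK hσ
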